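/- For every j ∈ ℕ, the polygonal path η̂_j = [w₋(j), v(j,0)] ∪ ⋃_{k ∈ ℕ} [v(j,k), v(j,k+1)] lies entirely on the front boundary of K: every point q of η̂_j satisfies q ∈ K, and q + (0, s, 0) ∉ K for every real s > 0. -/

import Mathlib

/-!
Every edge of `η̂_j` is exposed by a functional `F (x, y, z) = -μ x + y + γ z` with `γ = j + 1/2`:
`F` is constant on the edge and there attains its maximum over the generators of `K`, hence over
`K`; as `F` grows along the `y`-axis, nothing strictly in front of the edge lies in `K`.
Along `w₋` the increments of `F` are `(γ - n) / n³`, so `F ∘ w₋` peaks at `j`, with a gap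
`1 / (2 (j+1)³)`; along `w₊` they are `(1/n - μ) / n²`, so for `1/(k+2) ≤ μ ≤ 1/(k+1)` the
function `F ∘ w₊` peaks at `k + 1`. The first edge takes `μ = 1`, the edge `[v(j,k), v(j,k+1)]`
the `μ` in that interval making `F (v(j,k)) = F (v(j,k+1))`. The points `u - w₊(k)` stay below
`γ ζ₃ - 2 ≤ γ ζ₃ - ζ₂ = lim F (w₋(n)) ≤ F (w₋(j))`, using `ζ₂ = π²/6 ≤ 2`.
-/

open Pointwise

/-- `w₋(j) = (0, −∑_{t=1}^{j} 1/t², ∑_{t=1}^{j} 1/t³)`. -/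
noncomputable def wM (j : ℕ) : Fin 3 → ℝ :=
  ![0, -(∑ t ∈ Finset.Icc 1 j, (1 : ℝ) / (t : ℝ) ^ 2),
    ∑ t ∈ Finset.Icc 1 j, (1 : ℝ) / (t : ℝ) ^ 3]

/-- `w₊(k) = (∑_{t=1}^{k} 1/t², ∑_{t=1}^{k} 1/t³, 0)`. -/
noncomputable def wP (k : ℕ) : Fin 3 → ℝ :=
  ![∑ t ∈ Finset.Icc 1 k, (1 : ℝ) / (t : ℝ) ^ 2,
    ∑ t ∈ Finset.Icc 1 k, (1 : ℝ) / (t : ℝ) ^ 3, 0]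

/-- `ζ₂ = ∑_{t=1}^{∞} 1/t²`. -/
noncomputable def zeta2 : ℝ := ∑' t : ℕ, (1 : ℝ) / ((t : ℝ) + 1) ^ 2

/-- `ζ₃ = ∑_{t=1}^{∞} 1/t³`. -/
noncomputable def zeta3 : ℝ := ∑' t : ℕ, (1 : ℝ) / ((t : ℝ) + 1) ^ 3

/-- `u₁ = (ζ₂, −2, ζ₃)`. -/
noncomputable def uOne : Fin 3 → ℝ := ![zeta2, -2, zeta3]

/-- `u₀ = (ζ₂, −2, 0)`. -/
noncomputable def uZero : Fin 3 → ℝ := ![zeta2, -2, 0]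

/-- `v(j,k) = (1/(j+1)³)·w(j,k) + (((j+1)³ − 1)/(j+1)³)·w(j,k+1)` where
`w(j,k) = w₋(j) + w₊(k)`. -/
noncomputable def vU (j k : ℕ) : Fin 3 → ℝ :=
  ((1 : ℝ) / ((j : ℝ) + 1) ^ 3) • (wM j + wP k) +
    ((((j : ℝ) + 1) ^ 3 - 1) / ((j : ℝ) + 1) ^ 3) • (wM j + wP (k + 1))

/-- The universal convex body `K`: the closure of the convex hull of the points
`w₋(j)`, `v(j,k)`, `u₀ − w₊(k)` and `u₁ − w₊(k)`. -/
noncomputable def KU : Set (Fin 3 → ℝ) :=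
  closure (convexHull ℝ
    (Set.range wM ∪ (⋃ j : ℕ, Set.range (vU j)) ∪
     Set.range (fun k => uZero - wP k) ∪ Set.range (fun k => uOne - wP k)))

open Finset Filter Topology

section Support

variable {E : Type*} [AddCommGroup E] [Module ℝ E] [TopologicalSpace E]

theorem closure_convexHull_subset_setOf_le {S : Set E} {φ : E →L[ℝ] ℝ} {c : ℝ}
    (h : ∀ x ∈ S, φ x ≤ c) : closure (convexHull ℝ S) ⊆ {x | φ x ≤ c} :=
  closure_minimal (convexHull_min h (convex_halfSpace_le φ.toLinearMap.isLinear c))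
    (isClosed_le φ.continuous continuous_const)

theorem mem_closure_convexHull_and_add_notMem_of_supporting {S : Set E} (φ : E →L[ℝ] ℝ)
    {x y q : E} (hx : x ∈ S) (hy : y ∈ S) (hS : ∀ z ∈ S, φ z ≤ φ x) (hxy : φ y = φ x)
    (hq : q ∈ segment ℝ x y) :
    q ∈ closure (convexHull ℝ S) ∧ ∀ v, 0 < φ v → q + v ∉ closure (convexHull ℝ S) := by
  have hφq : φ q = φ x :=
    (convex_hyperplane φ.toLinearMap.isLinear (φ x)).segment_subset rfl hxy hq
  refine ⟨subset_closure (segment_subset_convexHull hx hy hq), fun v hv hmem => ?_⟩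
  have : φ (q + v) ≤ φ x := closure_convexHull_subset_setOf_le hS hmem
  rw [map_add, hφq] at this
  linarith

end Support

theorem apply_le_apply_of_unimodal {β : Type*} [Preorder β] {f : ℕ → β} {N : ℕ}
    (hup : ∀ n < N, f n ≤ f (n + 1)) (hdown : ∀ n ≥ N, f (n + 1) ≤ f n) (n : ℕ) :
    f n ≤ f N := by
  rcases le_total n N with h | h
  · exact monotoneOn_of_le_add_one Set.ordConnected_Iic (fun a _ _ ha => hup a ha)
      h (Set.mem_Iic.2 le_rfl) h
  · exact Nat.rel_of_forall_rel_succ_of_le_of_le (· ≥ ·) hdown le_rfl h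

theorem exists_mem_Icc_weighted_sum_eq_zero {α β x y : ℝ} (hα : 0 < α) (hβ : 0 ≤ β)
    (hxy : x ≤ y) : ∃ μ ∈ Set.Icc x y, α * (y - μ) + β * (x - μ) = 0 := by
  have hαβ : 0 < α + β := by linarith
  refine ⟨(α * y + β * x) / (α + β), ⟨?_, ?_⟩, ?_⟩
  · rw [le_div_iff₀ hαβ]; nlinarith
  · rw [div_le_iff₀ hαβ]; nlinarith
  · field_simp; ring

noncomputable def genHarmonic (s n : ℕ) : ℝ := ∑ t ∈ Icc 1 n, (1 : ℝ) / (t : ℝ) ^ s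

theorem genHarmonic_succ (s n : ℕ) :
    genHarmonic s (n + 1) = genHarmonic s n + 1 / ((n : ℝ) + 1) ^ s := by
  rw [genHarmonic, genHarmonic, sum_Icc_succ_top (by omega)]
  push_cast
  rfl

theorem genHarmonic_eq_sum_range (s n : ℕ) :
    genHarmonic s n = ∑ i ∈ range n, 1 / ((i : ℝ) + 1) ^ s := by
  induction n with
  | zero => simp [genHarmonic]
  | succ n ih => rw [genHarmonic_succ, sum_range_succ, ih]

theorem genHarmonic_nonneg (s n : ℕ) : 0 ≤ genHarmonic s n :=
  sum_nonneg fun _ _ => by positivity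

theorem tendsto_genHarmonic {s : ℕ} (hs : 1 < s) :
    Tendsto (genHarmonic s) atTop (𝓝 (∑' t : ℕ, 1 / ((t : ℝ) + 1) ^ s)) := by
  have h : Summable fun t : ℕ => 1 / ((t : ℝ) + 1) ^ s := by
    simpa using (summable_nat_add_iff 1).2 (Real.summable_one_div_nat_pow.2 hs)
  convert h.hasSum.tendsto_sum_nat using 1
  exact funext (genHarmonic_eq_sum_range s)

theorem genHarmonic_le_tsum {s : ℕ} (hs : 1 < s) (n : ℕ) :
    genHarmonic s n ≤ ∑' t : ℕ, 1 / ((t : ℝ) + 1) ^ s :=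
  (monotone_nat_of_le_succ fun n => by
    rw [genHarmonic_succ]; exact le_add_of_nonneg_right (by positivity)).ge_of_tendsto
    (tendsto_genHarmonic hs) n

theorem zeta2_le_two : zeta2 ≤ 2 := by
  have h : HasSum (fun n : ℕ => 1 / ((n : ℝ) + 1) ^ 2) (Real.pi ^ 2 / 6) := by
    simpa using (hasSum_nat_add_iff' 1).2 hasSum_zeta_two
  rw [zeta2, h.tsum_eq]
  nlinarith [Real.pi_lt_d2, Real.pi_gt_three]

theorem zeta3_nonneg : 0 ≤ zeta3 := tsum_nonneg fun _ => by positivity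

noncomputable def frontFunctional (μ γ : ℝ) : (Fin 3 → ℝ) →L[ℝ] ℝ :=
  -μ • ContinuousLinearMap.proj 0 + ContinuousLinearMap.proj 1 + γ • ContinuousLinearMap.proj 2

@[simp]
theorem frontFunctional_apply (μ γ : ℝ) (x : Fin 3 → ℝ) :
    frontFunctional μ γ x = -μ * x 0 + x 1 + γ * x 2 := by
  simp [frontFunctional]

noncomputable def vWeight (j : ℕ) : ℝ := 1 / ((j : ℝ) + 1) ^ 3

theorem vWeight_pos (j : ℕ) : 0 < vWeight j := by
  unfold vWeight; positivity

theorem vWeight_le_one (j : ℕ) : vWeight j ≤ 1 := by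
  rw [vWeight, div_le_one (by positivity)]
  exact one_le_pow₀ (by linarith [(j.cast_nonneg : (0 : ℝ) ≤ j)])

theorem map_vU (φ : (Fin 3 → ℝ) →L[ℝ] ℝ) (j k : ℕ) :
    φ (vU j k) = φ (wM j) + φ (wP k) + (1 - vWeight j) * (φ (wP (k + 1)) - φ (wP k)) := by
  have h : (((j : ℝ) + 1) ^ 3 - 1) / ((j : ℝ) + 1) ^ 3 = 1 - vWeight j := by
    rw [vWeight, sub_div, div_self (by positivity)]
  simp only [vU, h, map_add, map_smul, smul_eq_mul, vWeight]
  ring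

noncomputable def stepM (γ : ℝ) (i : ℕ) : ℝ := (γ - ((i : ℝ) + 1)) / ((i : ℝ) + 1) ^ 3

noncomputable def stepP (μ : ℝ) (i : ℕ) : ℝ := (1 / ((i : ℝ) + 1) - μ) / ((i : ℝ) + 1) ^ 2

theorem frontFunctional_wM (μ γ : ℝ) (n : ℕ) :
    frontFunctional μ γ (wM n) = γ * genHarmonic 3 n - genHarmonic 2 n := by
  rw [frontFunctional_apply]
  change -μ * 0 + -genHarmonic 2 n + γ * genHarmonic 3 n = _
  ring

theorem frontFunctional_wP (μ γ : ℝ) (n : ℕ) :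
    frontFunctional μ γ (wP n) = genHarmonic 3 n - μ * genHarmonic 2 n := by
  rw [frontFunctional_apply]
  change -μ * genHarmonic 2 n + genHarmonic 3 n + γ * 0 = _
  ring

theorem frontFunctional_wM_succ (μ γ : ℝ) (n : ℕ) :
    frontFunctional μ γ (wM (n + 1)) = frontFunctional μ γ (wM n) + stepM γ n := by
  simp only [frontFunctional_wM, genHarmonic_succ, stepM]
  field_simp
  ring

theorem frontFunctional_wP_succ (μ γ : ℝ) (n : ℕ) :
    frontFunctional μ γ (wP (n + 1)) = frontFunctional μ γ (wP n) + stepP μ n := by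
  simp only [frontFunctional_wP, genHarmonic_succ, stepP]
  field_simp
  ring

theorem frontFunctional_wP_zero (μ γ : ℝ) : frontFunctional μ γ (wP 0) = 0 := by
  rw [frontFunctional_wP]
  simp [genHarmonic]

theorem frontFunctional_uOne_sub_wP_le {μ : ℝ} (hμ : 0 ≤ μ) (γ : ℝ) (k : ℕ) :
    frontFunctional μ γ (uOne - wP k) ≤ γ * zeta3 - 2 := by
  have hval : frontFunctional μ γ (uOne - wP k) =
      γ * zeta3 - 2 - μ * (zeta2 - genHarmonic 2 k) - genHarmonic 3 k := by
    rw [frontFunctional_apply]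
    change -μ * (zeta2 - genHarmonic 2 k) + (-2 - genHarmonic 3 k) + γ * (zeta3 - 0) = _
    ring
  have h₂ : genHarmonic 2 k ≤ zeta2 := genHarmonic_le_tsum (by norm_num) k
  nlinarith [genHarmonic_nonneg 3 k]

theorem frontFunctional_uZero_sub_wP_le {μ γ : ℝ} (hμ : 0 ≤ μ) (hγ : 0 ≤ γ) (k : ℕ) :
    frontFunctional μ γ (uZero - wP k) ≤ γ * zeta3 - 2 := by
  have hval : frontFunctional μ γ (uZero - wP k) =
      -2 - μ * (zeta2 - genHarmonic 2 k) - genHarmonic 3 k := by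
    rw [frontFunctional_apply]
    change -μ * (zeta2 - genHarmonic 2 k) + (-2 - genHarmonic 3 k) + γ * (0 - 0) = _
    ring
  have h₂ : genHarmonic 2 k ≤ zeta2 := genHarmonic_le_tsum (by norm_num) k
  nlinarith [genHarmonic_nonneg 3 k, zeta3_nonneg]

section WMinus

variable (μ : ℝ) (j : ℕ)

theorem stepM_nonneg {i : ℕ} (hi : i < j) : 0 ≤ stepM (j + 1 / 2) i := by
  have : (i : ℝ) + 1 ≤ j := by exact_mod_cast hi
  unfold stepM
  apply div_nonneg (by linarith) (by positivity)

theorem stepM_eq_neg_half_vWeight : stepM (j + 1 / 2) j = -(vWeight j / 2) := by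
  rw [stepM, vWeight]
  ring

theorem stepM_nonpos {i : ℕ} (hi : j ≤ i) : stepM (j + 1 / 2) i ≤ 0 := by
  have : (j : ℝ) ≤ i := by exact_mod_cast hi
  unfold stepM
  apply div_nonpos_of_nonpos_of_nonneg (by linarith) (by positivity)

theorem frontFunctional_wM_le (n : ℕ) :
    frontFunctional μ (j + 1 / 2) (wM n) ≤ frontFunctional μ (j + 1 / 2) (wM j) :=
  apply_le_apply_of_unimodal (f := fun n => frontFunctional μ (j + 1 / 2) (wM n))
    (fun i hi => by rw [frontFunctional_wM_succ]; linarith [stepM_nonneg j hi])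
    (fun i hi => by rw [frontFunctional_wM_succ]; linarith [stepM_nonpos j hi]) n

theorem frontFunctional_wM_add_vWeight_le {n : ℕ} (hn : n ≠ j) :
    frontFunctional μ (j + 1 / 2) (wM n) + vWeight j / 2 ≤
      frontFunctional μ (j + 1 / 2) (wM j) := by
  rcases hn.lt_or_gt with hn | hn
  · have hstep : vWeight j / 2 ≤ stepM (j + 1 / 2) n := by
      have hnj : (n : ℝ) + 1 ≤ j := by exact_mod_cast hn
      have hcube : ((n : ℝ) + 1) ^ 3 ≤ ((j : ℝ) + 1) ^ 3 := by gcongr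
      rw [vWeight, stepM, div_div, div_le_div_iff₀ (by positivity) (by positivity)]
      nlinarith [mul_le_mul_of_nonneg_right (by linarith : (1 : ℝ) / 2 ≤ j + 1 / 2 - (n + 1))
        (by positivity : (0 : ℝ) ≤ ((j : ℝ) + 1) ^ 3)]
    have := frontFunctional_wM_le μ j (n + 1)
    rw [frontFunctional_wM_succ] at this
    linarith
  · have hdesc :
        frontFunctional μ (j + 1 / 2) (wM n) ≤ frontFunctional μ (j + 1 / 2) (wM (j + 1)) :=
      Nat.rel_of_forall_rel_succ_of_le_of_le (· ≥ ·)
        (f := fun n => frontFunctional μ (j + 1 / 2) (wM n))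
        (fun i hi => by rw [frontFunctional_wM_succ]; linarith [stepM_nonpos j hi])
        (Nat.le_succ j) hn
    rw [frontFunctional_wM_succ, stepM_eq_neg_half_vWeight] at hdesc
    linarith

theorem zeta3_sub_two_le_frontFunctional_wM :
    (j + 1 / 2) * zeta3 - 2 ≤ frontFunctional μ (j + 1 / 2) (wM j) := by
  have hlim : Tendsto (fun n => frontFunctional μ (j + 1 / 2) (wM n)) atTop
      (𝓝 ((j + 1 / 2) * zeta3 - zeta2)) := by
    simp only [frontFunctional_wM]
    exact ((tendsto_genHarmonic (by norm_num)).const_mul _).sub (tendsto_genHarmonic (by norm_num))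
  linarith [le_of_tendsto' hlim (frontFunctional_wM_le μ j), zeta2_le_two]

end WMinus

section WPlus

variable {μ : ℝ} (γ : ℝ)

theorem stepP_nonneg {i : ℕ} (h : μ ≤ 1 / ((i : ℝ) + 1)) : 0 ≤ stepP μ i :=
  div_nonneg (by linarith) (by positivity)

theorem stepP_nonpos {i : ℕ} (h : 1 / ((i : ℝ) + 1) ≤ μ) : stepP μ i ≤ 0 :=
  div_nonpos_of_nonpos_of_nonneg (by linarith) (by positivity)

theorem stepP_nonneg_of_le {k i : ℕ} (hμ : μ ≤ 1 / ((k : ℝ) + 1)) (hi : i ≤ k) :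
    0 ≤ stepP μ i := by
  have : (i : ℝ) ≤ k := by exact_mod_cast hi
  exact stepP_nonneg (hμ.trans (one_div_le_one_div_of_le (by positivity) (by linarith)))

theorem stepP_nonpos_of_le {k i : ℕ} (hμ : 1 / ((k : ℝ) + 2) ≤ μ) (hi : k + 1 ≤ i) :
    stepP μ i ≤ 0 := by
  have : (k : ℝ) + 1 ≤ i := by exact_mod_cast hi
  exact stepP_nonpos ((one_div_le_one_div_of_le (by positivity) (by linarith)).trans hμ)

theorem frontFunctional_wP_le {N : ℕ} (hup : ∀ i < N, 0 ≤ stepP μ i)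
    (hdown : ∀ i ≥ N, stepP μ i ≤ 0) (n : ℕ) :
    frontFunctional μ γ (wP n) ≤ frontFunctional μ γ (wP N) :=
  apply_le_apply_of_unimodal (f := fun n => frontFunctional μ γ (wP n))
    (fun i hi => by rw [frontFunctional_wP_succ]; linarith [hup i hi])
    (fun i hi => by rw [frontFunctional_wP_succ]; linarith [hdown i hi]) n

theorem frontFunctional_vU_le {N : ℕ} (hup : ∀ i < N, 0 ≤ stepP μ i)
    (hdown : ∀ i ≥ N, stepP μ i ≤ 0) (j k : ℕ) :
    frontFunctional μ γ (vU j k) ≤ frontFunctional μ γ (wM j) + frontFunctional μ γ (wP N) := by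
  have h₀ := frontFunctional_wP_le γ hup hdown k
  have h₁ := frontFunctional_wP_le γ hup hdown (k + 1)
  have hw := vWeight_pos j
  have hw' := vWeight_le_one j
  rw [map_vU]
  nlinarith

theorem frontFunctional_vU_succ (j k : ℕ) :
    frontFunctional μ γ (vU j (k + 1)) = frontFunctional μ γ (vU j k) +
      (vWeight j * stepP μ k + (1 - vWeight j) * stepP μ (k + 1)) := by
  simp only [map_vU, frontFunctional_wP_succ]
  ring

end WPlus

theorem exists_edgeSlope (j k : ℕ) :
    ∃ μ ∈ Set.Icc (1 / ((k : ℝ) + 2)) (1 / ((k : ℝ) + 1)),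
      vWeight j * stepP μ k + (1 - vWeight j) * stepP μ (k + 1) = 0 := by
  obtain ⟨μ, hμ, hrel⟩ := exists_mem_Icc_weighted_sum_eq_zero
    (α := vWeight j / ((k : ℝ) + 1) ^ 2) (β := (1 - vWeight j) / ((k : ℝ) + 2) ^ 2)
    (div_pos (vWeight_pos j) (by positivity))
    (div_nonneg (by linarith [vWeight_le_one j]) (by positivity))
    (one_div_le_one_div_of_le (by positivity) (by linarith) : 1 / ((k : ℝ) + 2) ≤ 1 / ((k : ℝ) + 1))
  refine ⟨μ, hμ, ?_⟩
  rw [← hrel, stepP, stepP]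
  push_cast
  ring

theorem stepP_le_half {μ : ℝ} {k : ℕ} (hμ : 1 / ((k : ℝ) + 2) ≤ μ) : stepP μ k ≤ 1 / 2 := by
  have hk : (0 : ℝ) ≤ k := k.cast_nonneg
  have hgap : 1 / ((k : ℝ) + 1) - 1 / ((k : ℝ) + 2) ≤ 1 / 2 := by
    rw [div_sub_div _ _ (by positivity) (by positivity),
      div_le_div_iff₀ (by positivity) (by norm_num)]
    nlinarith
  rcases le_total 0 (1 / ((k : ℝ) + 1) - μ) with h | h
  · calc stepP μ k ≤ (1 / ((k : ℝ) + 1) - μ) / 1 :=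
          div_le_div_of_nonneg_left h one_pos (one_le_pow₀ (by linarith))
      _ ≤ 1 / 2 := by linarith
  · linarith [stepP_nonpos (μ := μ) (i := k) (by linarith)]

theorem frontFunctional_vU_le_of_edgeSlope {μ : ℝ} {j k : ℕ}
    (hμ : μ ∈ Set.Icc (1 / ((k : ℝ) + 2)) (1 / ((k : ℝ) + 1)))
    (hrel : vWeight j * stepP μ k + (1 - vWeight j) * stepP μ (k + 1) = 0) (γ : ℝ) (k' : ℕ) :
    frontFunctional μ γ (vU j k') ≤ frontFunctional μ γ (vU j k) := by
  have hw := vWeight_pos j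
  have hw' := vWeight_le_one j
  refine apply_le_apply_of_unimodal (f := fun k' => frontFunctional μ γ (vU j k'))
    (fun i hi => ?_) (fun i hi => ?_) k'
  · rw [frontFunctional_vU_succ]
    nlinarith [stepP_nonneg_of_le hμ.2 hi.le, stepP_nonneg_of_le (i := i + 1) hμ.2 hi]
  · rw [frontFunctional_vU_succ]
    rcases hi.eq_or_lt with rfl | hi
    · linarith
    · nlinarith [stepP_nonpos_of_le hμ.1 hi, stepP_nonpos_of_le (i := i + 1) hμ.1 (by omega)]

def KGen : Set (Fin 3 → ℝ) :=
  Set.range wM ∪ (⋃ j : ℕ, Set.range (vU j)) ∪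
    Set.range (fun k => uZero - wP k) ∪ Set.range (fun k => uOne - wP k)

theorem wM_mem_KGen (j : ℕ) : wM j ∈ KGen :=
  Or.inl <| Or.inl <| Or.inl ⟨j, rfl⟩

theorem vU_mem_KGen (j k : ℕ) : vU j k ∈ KGen :=
  Or.inl <| Or.inl <| Or.inr <| Set.mem_iUnion.2 ⟨j, k, rfl⟩

theorem frontFunctional_le_of_mem_KGen {μ c : ℝ} {j : ℕ} (hμ : 0 ≤ μ)
    (hc : frontFunctional μ (j + 1 / 2) (wM j) ≤ c)
    (hv : ∀ j' k', frontFunctional μ (j + 1 / 2) (vU j' k') ≤ c) :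
    ∀ x ∈ KGen, frontFunctional μ (j + 1 / 2) x ≤ c := by
  have hu := zeta3_sub_two_le_frontFunctional_wM μ j
  rintro x (((⟨n, rfl⟩ | hx) | ⟨k, rfl⟩) | ⟨k, rfl⟩)
  · exact (frontFunctional_wM_le μ j n).trans hc
  · obtain ⟨j', k', rfl⟩ := Set.mem_iUnion.1 hx
    exact hv j' k'
  · linarith [frontFunctional_uZero_sub_wP_le hμ (by positivity : (0 : ℝ) ≤ j + 1 / 2) k]
  · linarith [frontFunctional_uOne_sub_wP_le hμ (j + 1 / 2) k]

theorem frontFunctional_one_le_of_mem_KGen (j : ℕ) :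
    ∀ x ∈ KGen, frontFunctional 1 (j + 1 / 2) x ≤ frontFunctional 1 (j + 1 / 2) (wM j) := by
  refine frontFunctional_le_of_mem_KGen zero_le_one le_rfl fun j' k' => ?_
  have hdown : ∀ i ≥ 0, stepP 1 i ≤ 0 := fun i _ =>
    stepP_nonpos (by rw [div_le_one (by positivity)]; linarith [i.cast_nonneg (α := ℝ)])
  have := frontFunctional_vU_le (j + 1 / 2) (by simp) hdown j' k'
  rw [frontFunctional_wP_zero, add_zero] at this
  exact this.trans (frontFunctional_wM_le 1 j j')

theorem frontFunctional_one_vU_zero (γ : ℝ) (j : ℕ) :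
    frontFunctional 1 γ (vU j 0) = frontFunctional 1 γ (wM j) := by
  rw [map_vU, frontFunctional_wP_succ, frontFunctional_wP_zero, stepP]
  norm_num

theorem exists_frontFunctional_edge (j k : ℕ) : ∃ μ : ℝ,
    (∀ x ∈ KGen, frontFunctional μ (j + 1 / 2) x ≤ frontFunctional μ (j + 1 / 2) (vU j k)) ∧
      frontFunctional μ (j + 1 / 2) (vU j (k + 1)) = frontFunctional μ (j + 1 / 2) (vU j k) := by
  obtain ⟨μ, hμ, hrel⟩ := exists_edgeSlope j k
  have hup : ∀ i < k + 1, 0 ≤ stepP μ i := fun i hi => stepP_nonneg_of_le hμ.2 (by omega)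
  have hdown : ∀ i ≥ k + 1, stepP μ i ≤ 0 := fun i hi => stepP_nonpos_of_le hμ.1 hi
  have hrow := frontFunctional_vU_le_of_edgeSlope hμ hrel (j + 1 / 2)
  have hvU := map_vU (frontFunctional μ (j + 1 / 2)) j k
  rw [frontFunctional_wP_succ] at hvU
  have hw := vWeight_pos j
  have hwM : frontFunctional μ (j + 1 / 2) (wM j) ≤ frontFunctional μ (j + 1 / 2) (vU j k) := by
    have := hrow 0
    rw [map_vU, frontFunctional_wP_succ, frontFunctional_wP_zero] at this
    nlinarith [hup 0 (by omega), vWeight_le_one j]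
  refine ⟨μ, frontFunctional_le_of_mem_KGen ((one_div_pos.2 (by positivity)).le.trans hμ.1) hwM
    fun j' k' => ?_, by rw [frontFunctional_vU_succ, hrel, add_zero]⟩
  obtain rfl | hj := eq_or_ne j' j
  · exact hrow k'
  -- off row `j`, the gap `vWeight j / 2` of `F ∘ w₋` at `j` pays for `vWeight j * stepP μ k`
  have hv := frontFunctional_vU_le (j + 1 / 2) hup hdown j' k'
  rw [frontFunctional_wP_succ] at hv
  nlinarith [frontFunctional_wM_add_vWeight_le μ j hj, stepP_le_half hμ.1]

theorem front_of_frontFunctional {μ γ : ℝ} {x y q : Fin 3 → ℝ} (hx : x ∈ KGen) (hy : y ∈ KGen)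
    (hS : ∀ z ∈ KGen, frontFunctional μ γ z ≤ frontFunctional μ γ x)
    (hxy : frontFunctional μ γ y = frontFunctional μ γ x) (hq : q ∈ segment ℝ x y) :
    q ∈ KU ∧ ∀ s : ℝ, 0 < s → q + ![0, s, 0] ∉ KU := by
  obtain ⟨hmem, hfront⟩ :=
    mem_closure_convexHull_and_add_notMem_of_supporting (frontFunctional μ γ) hx hy hS hxy hq
  exact ⟨hmem, fun s hs => hfront _ (by simpa using hs)⟩

/-- **Lemma (front boundary).** For every `j`, the polygonal path
`η̂_j = [w₋(j), v(j,0)] ∪ ⋃ₖ [v(j,k), v(j,k+1)]` lies entirely on the front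
boundary of `K`: every point `q` of the path lies in `K`, and no point strictly
in front of it (in the positive `y`-direction) lies in `K`. -/
theorem path_on_front_boundary (j : ℕ) (q : Fin 3 → ℝ)
    (hq : q ∈ segment ℝ (wM j) (vU j 0) ∪ ⋃ k : ℕ, segment ℝ (vU j k) (vU j (k + 1))) :
    q ∈ KU ∧ ∀ s : ℝ, 0 < s → q + ![0, s, 0] ∉ KU := by
  rcases hq with hq | hq
  · exact front_of_frontFunctional (wM_mem_KGen j) (vU_mem_KGen j 0)
      (frontFunctional_one_le_of_mem_KGen j) (frontFunctional_one_vU_zero _ j) hq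
  · obtain ⟨k, hq⟩ := Set.mem_iUnion.1 hq
    obtain ⟨μ, hS, hxy⟩ := exists_frontFunctional_edge j k
    exact front_of_frontFunctional (vU_mem_KGen j k) (vU_mem_KGen j (k + 1)) hS hxy hq
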